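/- arXiv:1211.4138 — 2 statements merged into one kernel-verified Lean document; each statement's English description precedes it below -/
import Mathlib

section
/- Loop removal yields strongly self-avoiding paths: in S = ℤ² × {0,1}, if there exists a path P = (x_0,...,x_k) with x_0 in the top side and x_k in the bottom side of the box B(n) = [0,n]² × {0,1}, all of whose vertices lie in a fixed set A ⊆ S (the open vertices), then there exists a path P' = (y_0,...,y_m) with all vertices in A ∩ B(n), y_0 in the top side, y_m in the bottom side, and such that π(y_i) = π(y_j) implies |i-j| ≤ 1 (strongly self-avoiding). -/
/-- Vertices of the sandwich `S = ℤ² × {0,1}`. -/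
abbrev SandwichV := ℤ × ℤ × Fin 2

/-- Adjacency in `S`: `ℓ¹` distance one. -/
def sandwichAdj (v w : SandwichV) : Prop :=
  |v.1 - w.1| + |v.2.1 - w.2.1| + |(v.2.2 : ℤ) - (w.2.2 : ℤ)| = 1

/-- The projection `π : S → ℤ²`. -/
def sandwichProj (v : SandwichV) : ℤ × ℤ := (v.1, v.2.1)

/-- Membership in the box `B(n) = [0,n]² × {0,1}`. -/
def inBox (n : ℕ) (v : SandwichV) : Prop :=
  0 ≤ v.1 ∧ v.1 ≤ (n : ℤ) ∧ 0 ≤ v.2.1 ∧ v.2.1 ≤ (n : ℤ)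


lemma adj_of_proj_eq (v w : SandwichV) (h : sandwichProj v = sandwichProj w)
    (hne : v ≠ w) : sandwichAdj v w := by
  simp only [sandwichProj, Prod.mk.injEq] at h
  obtain ⟨h1, h2⟩ := h
  have h3 : v.2.2 ≠ w.2.2 := by
    intro hc
    exact hne (Prod.ext h1 (Prod.ext h2 hc))
  unfold sandwichAdj
  rw [h1, h2]
  simp only [sub_self, abs_zero, zero_add]
  revert h3
  have : ∀ a b : Fin 2, a ≠ b → |((a : ℤ)) - ((b : ℤ))| = 1 := by decide
  exact this v.2.2 w.2.2

/-- Loop removal: if there is a path in `B(n)` with all vertices in a set `A`, starting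
on the top side (`y = n`) and ending on the bottom side (`y = 0`), then there is a
strongly self-avoiding such path: equal projections occur only at consecutive indices. -/
theorem loop_removal (n : ℕ) (A : Set SandwichV) (k : ℕ) (P : ℕ → SandwichV)
    (hA : ∀ i ≤ k, P i ∈ A)
    (hbox : ∀ i ≤ k, inBox n (P i))
    (hadj : ∀ i < k, sandwichAdj (P i) (P (i + 1)))
    (htop : (P 0).2.1 = (n : ℤ)) (hbot : (P k).2.1 = 0) :
    ∃ (m : ℕ) (y : ℕ → SandwichV),
      (∀ i ≤ m, y i ∈ A ∧ inBox n (y i)) ∧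
      (∀ i < m, sandwichAdj (y i) (y (i + 1))) ∧
      (y 0).2.1 = (n : ℤ) ∧ (y m).2.1 = 0 ∧
      (∀ i ≤ m, ∀ j ≤ m,
        sandwichProj (y i) = sandwichProj (y j) → i ≤ j + 1 ∧ j ≤ i + 1) := by
  induction k using Nat.strong_induction_on generalizing P with
  | _ k IH =>
  by_cases hss : ∀ i ≤ k, ∀ j ≤ k,
      sandwichProj (P i) = sandwichProj (P j) → i ≤ j + 1 ∧ j ≤ i + 1
  · exact ⟨k, P, fun i hi => ⟨hA i hi, hbox i hi⟩, hadj, htop, hbot, hss⟩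
  · push_neg at hss
    obtain ⟨i, hi, j, hj, hproj, hbad⟩ := hss
    have hkey : ∃ a b, a + 2 ≤ b ∧ b ≤ k ∧ sandwichProj (P a) = sandwichProj (P b) := by
      rcases le_or_gt i j with h | h
      · exact ⟨i, j, by omega, hj, hproj⟩
      · exact ⟨j, i, by omega, hi, hproj.symm⟩
    obtain ⟨a, b, hab, hbk, hpr⟩ := hkey
    by_cases heq : P a = P b
    · -- splice out [a+1, b], keeping P a = P b
      set d := b - a with hd
      refine IH (k - d) (by omega) (fun t => if t ≤ a then P t else P (t + d))
        ?_ ?_ ?_ ?_ ?_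
      · intro t ht
        split
        · exact hA t (by omega)
        · exact hA _ (by omega)
      · intro t ht
        split
        · exact hbox t (by omega)
        · exact hbox _ (by omega)
      · intro t ht
        split_ifs with h1 h2 h2
        · exact hadj t (by omega)
        · have hta : t = a := by omega
          subst hta
          have hbk' : b < k := by omega
          have he : t + 1 + d = b + 1 := by omega
          rw [he, heq]
          exact hadj b hbk'
        · omega
        · have he : t + 1 + d = t + d + 1 := by omega
          rw [he]
          exact hadj (t + d) (by omega)
      · simpa using htop
      · split_ifs with h1
        · have h2 : k - d = a := by omega
          have h3 : k = b := by omega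
          rw [h2, heq, ← h3]
          exact hbot
        · have he : k - d + d = k := by omega
          rw [he]
          exact hbot
    · -- splice out [a+1, b-1]; P a adjacent to P b
      set d := b - a - 1 with hd
      refine IH (k - d) (by omega) (fun t => if t ≤ a then P t else P (t + d))
        ?_ ?_ ?_ ?_ ?_
      · intro t ht
        split
        · exact hA t (by omega)
        · exact hA _ (by omega)
      · intro t ht
        split
        · exact hbox t (by omega)
        · exact hbox _ (by omega)
      · intro t ht
        split_ifs with h1 h2 h2
        · exact hadj t (by omega)
        · have hta : t = a := by omega
          subst hta
          have he : t + 1 + d = b := by omega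
          rw [he]
          exact adj_of_proj_eq _ _ hpr heq
        · omega
        · have he : t + 1 + d = t + d + 1 := by omega
          rw [he]
          exact hadj (t + d) (by omega)
      · simpa using htop
      · have h1 : ¬ (k - d ≤ a) := by omega
        rw [if_neg h1]
        have he : k - d + d = k := by omega
        rw [he]
        exact hbot
end

section
/- In ℤ² (or in the sandwich via ribbons), a self-avoiding top-down crossing path of the box [0,n]², extended by vertical segments to the lines y = n+1/2 and y = -1/2 and closed up along the left portion of the boundary of [-1/2, n+1/2]², forms a Jordan curve (a closed curve without self-intersections). -/
/-- Embedding of `ℤ²` into the plane `ℝ²`. -/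
def toPlaneR (z : ℤ × ℤ) : ℝ × ℝ := ((z.1 : ℝ), (z.2 : ℝ))

namespace CrossingAux

open Set

/-- Point of a segment at parameter `a`. -/
noncomputable def edgePt (P Q : ℝ × ℝ) (a : ℝ) : ℝ × ℝ := (1 - a) • P + a • Q

lemma edgePt_fst (P Q : ℝ × ℝ) (a : ℝ) : (edgePt P Q a).1 = (1 - a) * P.1 + a * Q.1 := rfl
lemma edgePt_snd (P Q : ℝ × ℝ) (a : ℝ) : (edgePt P Q a).2 = (1 - a) * P.2 + a * Q.2 := rfl
lemma edgePt_mk (x y x' y' c : ℝ) :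
    edgePt (x, y) (x', y') c = ((1 - c) * x + c * x', (1 - c) * y + c * y') := rfl

lemma edgePt_zero (P Q : ℝ × ℝ) : edgePt P Q 0 = P := by simp [edgePt]
lemma edgePt_one (P Q : ℝ × ℝ) : edgePt P Q 1 = Q := by simp [edgePt]

lemma edgePt_eq_add (P Q : ℝ × ℝ) (a : ℝ) : edgePt P Q a = P + a • (Q - P) := by
  simp only [edgePt, smul_sub, sub_smul, one_smul]; abel

lemma edgePt_inj {P Q : ℝ × ℝ} (h : P ≠ Q) {a b : ℝ}
    (hab : edgePt P Q a = edgePt P Q b) : a = b := by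
  have h1 : (1 - a) * P.1 + a * Q.1 = (1 - b) * P.1 + b * Q.1 := congrArg Prod.fst hab
  have h2 : (1 - a) * P.2 + a * Q.2 = (1 - b) * P.2 + b * Q.2 := congrArg Prod.snd hab
  by_cases hPQ : P.1 = Q.1
  · have hPQ2 : P.2 ≠ Q.2 := fun h2' => h (Prod.ext hPQ h2')
    have : (a - b) * (Q.2 - P.2) = 0 := by nlinarith [h2]
    rcases mul_eq_zero.mp this with h' | h'
    · linarith
    · exact absurd (by linarith : P.2 = Q.2) hPQ2
  · have : (a - b) * (Q.1 - P.1) = 0 := by nlinarith [h1]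
    rcases mul_eq_zero.mp this with h' | h'
    · linarith
    · exact absurd (by linarith : P.1 = Q.1) hPQ

lemma convex_bound {a u u' lo hi : ℝ} (h0 : 0 ≤ a) (h1 : a ≤ 1)
    (hu : lo ≤ u) (hu' : lo ≤ u') (h2 : u ≤ hi) (h2' : u' ≤ hi) :
    lo ≤ (1 - a) * u + a * u' ∧ (1 - a) * u + a * u' ≤ hi := by
  constructor <;> nlinarith

/-- Piecewise linear interpolation through `q 0, q 1, ..., q j`. -/
noncomputable def polyG (q : ℕ → ℝ × ℝ) : ℕ → ℝ → ℝ × ℝ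
  | 0 => fun _ => q 0
  | (j + 1) => fun t =>
      if t ≤ (j : ℝ) then polyG q j t else q j + (t - (j : ℝ)) • (q (j + 1) - q j)

lemma polyG_succ (q : ℕ → ℝ × ℝ) (j : ℕ) (t : ℝ) :
    polyG q (j + 1) t =
      if t ≤ (j : ℝ) then polyG q j t else q j + (t - (j : ℝ)) • (q (j + 1) - q j) := rfl

lemma polyG_eq (q : ℕ → ℝ × ℝ) :
    ∀ j i : ℕ, i < j → ∀ t : ℝ, (i : ℝ) ≤ t → t ≤ (i : ℝ) + 1 →
      polyG q j t = edgePt (q i) (q (i + 1)) (t - i) := by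
  intro j
  induction j with
  | zero => intro i hi; omega
  | succ j IH =>
    intro i hi t ht1 ht2
    rcases Nat.lt_succ_iff_lt_or_eq.mp hi with hij | rfl
    · have hle : t ≤ (j : ℝ) := le_trans ht2 (by exact_mod_cast Nat.succ_le_of_lt hij)
      rw [polyG_succ, if_pos hle]
      exact IH i hij t ht1 ht2
    · rw [polyG_succ]
      by_cases hle : t ≤ (i : ℝ)
      · have hti : t = (i : ℝ) := le_antisymm hle ht1
        rw [if_pos (hti ▸ le_refl _), hti]
        have : (i : ℝ) - i = 0 := by ring
        rw [this, edgePt_zero]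
        rcases Nat.eq_zero_or_pos i with rfl | hpos
        · rfl
        · obtain ⟨h, rfl⟩ : ∃ h, i = h + 1 := ⟨i - 1, by omega⟩
          rw [IH h (Nat.lt_succ_self h) _ (by push_cast; linarith) (by push_cast; linarith)]
          have : ((h + 1 : ℕ) : ℝ) - (h : ℝ) = 1 := by push_cast; ring
          rw [this, edgePt_one]
      · rw [if_neg hle, edgePt_eq_add]

lemma polyG_self (q : ℕ → ℝ × ℝ) (j : ℕ) : polyG q j (j : ℝ) = q j := by
  rcases Nat.eq_zero_or_pos j with rfl | hpos
  · rfl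
  · obtain ⟨h, rfl⟩ : ∃ h, j = h + 1 := ⟨j - 1, by omega⟩
    rw [polyG_eq q (h + 1) h (Nat.lt_succ_self h) _ (by push_cast; linarith)
      (by push_cast; linarith)]
    have : ((h + 1 : ℕ) : ℝ) - (h : ℝ) = 1 := by push_cast; ring
    rw [this, edgePt_one]

lemma polyG_continuous (q : ℕ → ℝ × ℝ) : ∀ j, Continuous (polyG q j) := by
  intro j
  induction j with
  | zero => exact continuous_const
  | succ j IH =>
    show Continuous fun t =>
      if t ≤ (j : ℝ) then polyG q j t else q j + (t - (j : ℝ)) • (q (j + 1) - q j)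
    apply Continuous.if_le IH _ continuous_id continuous_const
    · intro x hx
      subst hx
      rw [polyG_self]
      simp
    · exact continuous_const.add ((continuous_id.sub continuous_const).smul continuous_const)

lemma adj_cases {z w : ℤ × ℤ} (h : |z.1 - w.1| + |z.2 - w.2| = 1) :
    (z.2 = w.2 ∧ (w.1 = z.1 + 1 ∨ w.1 = z.1 - 1)) ∨
    (z.1 = w.1 ∧ (w.2 = z.2 + 1 ∨ w.2 = z.2 - 1)) := by
  rcases abs_cases (z.1 - w.1) with ⟨h1, _⟩ | ⟨h1, _⟩ <;>
    rcases abs_cases (z.2 - w.2) with ⟨h2, _⟩ | ⟨h2, _⟩ <;> omega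

lemma oneD {p w : ℤ} {a : ℝ} (hw : w = p + 1 ∨ w = p - 1) (h0 : 0 ≤ a) (h1 : a < 1)
    {c : ℤ} (he : (1 - a) * (p : ℝ) + a * (w : ℝ) = (c : ℝ)) : a = 0 ∧ p = c := by
  rcases hw with hw | hw
  · have hwR : (w : ℝ) = (p : ℝ) + 1 := by exact_mod_cast hw
    have hc : ((c - p : ℤ) : ℝ) = a := by push_cast; nlinarith [he, hwR]
    have l1 : (0 : ℤ) ≤ c - p := by exact_mod_cast hc ▸ h0
    have l2 : c - p < 1 := by exact_mod_cast hc ▸ h1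
    have : c - p = 0 := by omega
    constructor
    · rw [← hc, this]; simp
    · omega
  · have hwR : (w : ℝ) = (p : ℝ) - 1 := by push_cast [hw]; ring
    have hc : ((p - c : ℤ) : ℝ) = a := by push_cast; nlinarith [he, hwR]
    have l1 : (0 : ℤ) ≤ p - c := by exact_mod_cast hc ▸ h0
    have l2 : p - c < 1 := by exact_mod_cast hc ▸ h1
    have : p - c = 0 := by omega
    constructor
    · rw [← hc, this]; simp
    · omega

/-- A lattice point on a half-open unit lattice edge must be the left endpoint. -/
lemma edgePt_lattice {z w : ℤ × ℤ} (hadj : |z.1 - w.1| + |z.2 - w.2| = 1) {a : ℝ}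
    (h0 : 0 ≤ a) (h1 : a < 1) {c d : ℤ}
    (hc : edgePt (toPlaneR z) (toPlaneR w) a = ((c : ℝ), (d : ℝ))) :
    a = 0 ∧ z.1 = c ∧ z.2 = d := by
  have e1 : (1 - a) * (z.1 : ℝ) + a * (w.1 : ℝ) = (c : ℝ) := congrArg Prod.fst hc
  have e2 : (1 - a) * (z.2 : ℝ) + a * (w.2 : ℝ) = (d : ℝ) := congrArg Prod.snd hc
  rcases adj_cases hadj with ⟨hzw, hw⟩ | ⟨hzw, hw⟩
  · have hz2 : z.2 = d := by
      have : (z.2 : ℝ) = (d : ℝ) := by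
        have hwR : (w.2 : ℝ) = (z.2 : ℝ) := by exact_mod_cast hzw.symm
        nlinarith [e2, hwR]
      exact_mod_cast this
    obtain ⟨ha, hp⟩ := oneD hw h0 h1 e1
    exact ⟨ha, hp, hz2⟩
  · have hz1 : z.1 = c := by
      have : (z.1 : ℝ) = (c : ℝ) := by
        have hwR : (w.1 : ℝ) = (z.1 : ℝ) := by exact_mod_cast hzw.symm
        nlinarith [e1, hwR]
      exact_mod_cast this
    obtain ⟨ha, hp⟩ := oneD hw h0 h1 e2
    exact ⟨ha, hz1, hp⟩

lemma oneD2 {p q wp wq : ℤ} {a b : ℝ} (hwp : wp = p + 1 ∨ wp = p - 1)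
    (hwq : wq = q + 1 ∨ wq = q - 1) (ha0 : 0 < a) (ha1 : a < 1) (hb0 : 0 < b) (hb1 : b < 1)
    (he : (1 - a) * (p : ℝ) + a * (wp : ℝ) = (1 - b) * (q : ℝ) + b * (wq : ℝ)) :
    (p = q ∧ wp = wq) ∨ (p = wq ∧ wp = q) := by
  rcases hwp with hwp | hwp <;> rcases hwq with hwq | hwq
  · have hc : ((p - q : ℤ) : ℝ) = b - a := by push_cast [hwp, hwq] at he ⊢; nlinarith [he]
    have l1 : (-1 : ℤ) < p - q := by
      have : (-1 : ℝ) < ((p - q : ℤ) : ℝ) := by rw [hc]; linarith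
      exact_mod_cast this
    have l2 : p - q < 1 := by
      have : ((p - q : ℤ) : ℝ) < 1 := by rw [hc]; linarith
      exact_mod_cast this
    left; omega
  · have hc : ((p - q : ℤ) : ℝ) = -(a + b) := by push_cast [hwp, hwq] at he ⊢; nlinarith [he]
    have l1 : (-2 : ℤ) < p - q := by
      have : (-2 : ℝ) < ((p - q : ℤ) : ℝ) := by rw [hc]; linarith
      exact_mod_cast this
    have l2 : p - q < 0 := by
      have : ((p - q : ℤ) : ℝ) < 0 := by rw [hc]; linarith
      exact_mod_cast this
    right; omega
  · have hc : ((p - q : ℤ) : ℝ) = a + b := by push_cast [hwp, hwq] at he ⊢; nlinarith [he]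
    have l1 : (0 : ℤ) < p - q := by
      have : (0 : ℝ) < ((p - q : ℤ) : ℝ) := by rw [hc]; linarith
      exact_mod_cast this
    have l2 : p - q < 2 := by
      have : ((p - q : ℤ) : ℝ) < 2 := by rw [hc]; linarith
      exact_mod_cast this
    right; omega
  · have hc : ((p - q : ℤ) : ℝ) = a - b := by push_cast [hwp, hwq] at he ⊢; nlinarith [he]
    have l1 : (-1 : ℤ) < p - q := by
      have : (-1 : ℝ) < ((p - q : ℤ) : ℝ) := by rw [hc]; linarith
      exact_mod_cast this
    have l2 : p - q < 1 := by
      have : ((p - q : ℤ) : ℝ) < 1 := by rw [hc]; linarith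
      exact_mod_cast this
    left; omega

/-- Two half-open unit lattice edges sharing a point: either same left endpoint,
or they are the same edge reversed. -/
lemma edge_edge {z w z' w' : ℤ × ℤ}
    (h : |z.1 - w.1| + |z.2 - w.2| = 1) (h' : |z'.1 - w'.1| + |z'.2 - w'.2| = 1)
    {a b : ℝ} (ha0 : 0 ≤ a) (ha1 : a < 1) (hb0 : 0 ≤ b) (hb1 : b < 1)
    (heq : edgePt (toPlaneR z) (toPlaneR w) a = edgePt (toPlaneR z') (toPlaneR w') b) :
    z = z' ∨ (z = w' ∧ w = z') := by
  have e1 : (1 - a) * (z.1 : ℝ) + a * (w.1 : ℝ) = (1 - b) * (z'.1 : ℝ) + b * (w'.1 : ℝ) :=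
    congrArg Prod.fst heq
  have e2 : (1 - a) * (z.2 : ℝ) + a * (w.2 : ℝ) = (1 - b) * (z'.2 : ℝ) + b * (w'.2 : ℝ) :=
    congrArg Prod.snd heq
  rcases eq_or_lt_of_le ha0 with haz | hapos
  · have hpt : edgePt (toPlaneR z') (toPlaneR w') b = ((z.1 : ℝ), (z.2 : ℝ)) := by
      rw [← heq, ← haz]; simp [edgePt, toPlaneR]
    obtain ⟨_, h1, h2⟩ := edgePt_lattice h' hb0 hb1 hpt
    exact Or.inl (Prod.ext h1.symm h2.symm)
  rcases eq_or_lt_of_le hb0 with hbz | hbpos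
  · have hpt : edgePt (toPlaneR z) (toPlaneR w) a = ((z'.1 : ℝ), (z'.2 : ℝ)) := by
      rw [heq, ← hbz]; simp [edgePt, toPlaneR]
    obtain ⟨_, h1, h2⟩ := edgePt_lattice h ha0 ha1 hpt
    exact Or.inl (Prod.ext h1 h2)
  rcases adj_cases h with ⟨hzw, hw⟩ | ⟨hzw, hw⟩ <;>
    rcases adj_cases h' with ⟨hzw', hw'⟩ | ⟨hzw', hw'⟩
  · have h2 : z.2 = z'.2 := by
      have hwR : (w.2 : ℝ) = (z.2 : ℝ) := by exact_mod_cast hzw.symm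
      have hwR' : (w'.2 : ℝ) = (z'.2 : ℝ) := by exact_mod_cast hzw'.symm
      have : (z.2 : ℝ) = (z'.2 : ℝ) := by nlinarith [e2, hwR, hwR']
      exact_mod_cast this
    rcases oneD2 hw hw' hapos ha1 hbpos hb1 e1 with ⟨hp, hq⟩ | ⟨hp, hq⟩
    · exact Or.inl (Prod.ext hp h2)
    · exact Or.inr ⟨Prod.ext hp (by omega), Prod.ext hq (by omega)⟩
  · exfalso
    have hpt : edgePt (toPlaneR z) (toPlaneR w) a = ((z'.1 : ℝ), (z.2 : ℝ)) := by
      apply Prod.ext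
      · rw [heq]
        show (1 - b) * (z'.1 : ℝ) + b * (w'.1 : ℝ) = (z'.1 : ℝ)
        have : (w'.1 : ℝ) = (z'.1 : ℝ) := by exact_mod_cast hzw'.symm
        nlinarith [this]
      · show (1 - a) * (z.2 : ℝ) + a * (w.2 : ℝ) = (z.2 : ℝ)
        have : (w.2 : ℝ) = (z.2 : ℝ) := by exact_mod_cast hzw.symm
        nlinarith [this]
    obtain ⟨haz, -, -⟩ := edgePt_lattice h ha0 ha1 hpt
    exact absurd haz (ne_of_gt hapos)
  · exfalso
    have hpt : edgePt (toPlaneR z) (toPlaneR w) a = ((z.1 : ℝ), (z'.2 : ℝ)) := by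
      apply Prod.ext
      · show (1 - a) * (z.1 : ℝ) + a * (w.1 : ℝ) = (z.1 : ℝ)
        have : (w.1 : ℝ) = (z.1 : ℝ) := by exact_mod_cast hzw.symm
        nlinarith [this]
      · rw [heq]
        show (1 - b) * (z'.2 : ℝ) + b * (w'.2 : ℝ) = (z'.2 : ℝ)
        have : (w'.2 : ℝ) = (z'.2 : ℝ) := by exact_mod_cast hzw'.symm
        nlinarith [this]
    obtain ⟨haz, -, -⟩ := edgePt_lattice h ha0 ha1 hpt
    exact absurd haz (ne_of_gt hapos)
  · have h1 : z.1 = z'.1 := by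
      have hwR : (w.1 : ℝ) = (z.1 : ℝ) := by exact_mod_cast hzw.symm
      have hwR' : (w'.1 : ℝ) = (z'.1 : ℝ) := by exact_mod_cast hzw'.symm
      have : (z.1 : ℝ) = (z'.1 : ℝ) := by nlinarith [e1, hwR, hwR']
      exact_mod_cast this
    rcases oneD2 hw hw' hapos ha1 hbpos hb1 e2 with ⟨hp, hq⟩ | ⟨hp, hq⟩
    · exact Or.inl (Prod.ext h1 hp)
    · exact Or.inr ⟨Prod.ext (by omega) hp, Prod.ext (by omega) hq⟩

/-- The closed vertex loop: path vertices together with the left boundary detour. -/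
noncomputable def qv (n k : ℕ) (v : ℕ → ℤ × ℤ) : ℕ → ℝ × ℝ := fun i =>
  if i = 0 then (((v 0).1 : ℝ), (n : ℝ) + 1 / 2)
  else if i ≤ k + 1 then toPlaneR (v (i - 1))
  else if i = k + 2 then (((v k).1 : ℝ), -(1 / 2 : ℝ))
  else if i = k + 3 then (-(1 / 2 : ℝ), -(1 / 2 : ℝ))
  else if i = k + 4 then (-(1 / 2 : ℝ), (n : ℝ) + 1 / 2)
  else (((v 0).1 : ℝ), (n : ℝ) + 1 / 2)

section QV

variable (n k : ℕ) (v : ℕ → ℤ × ℤ)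

lemma qv_zero : qv n k v 0 = (((v 0).1 : ℝ), (n : ℝ) + 1 / 2) := by simp [qv]

lemma qv_path {i : ℕ} (h1 : 1 ≤ i) (h2 : i ≤ k + 1) :
    qv n k v i = toPlaneR (v (i - 1)) := by
  simp only [qv]
  rw [if_neg (by omega), if_pos h2]

lemma qv_k2 : qv n k v (k + 2) = (((v k).1 : ℝ), -(1 / 2 : ℝ)) := by
  simp only [qv]
  rw [if_neg (by omega), if_neg (by omega)]
  simp

lemma qv_k3 : qv n k v (k + 3) = (-(1 / 2 : ℝ), -(1 / 2 : ℝ)) := by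
  simp only [qv]
  rw [if_neg (by omega), if_neg (by omega), if_neg (by omega)]
  simp

lemma qv_k4 : qv n k v (k + 4) = (-(1 / 2 : ℝ), (n : ℝ) + 1 / 2) := by
  simp only [qv]
  rw [if_neg (by omega), if_neg (by omega), if_neg (by omega), if_neg (by omega)]
  simp

lemma qv_k5 : qv n k v (k + 5) = (((v 0).1 : ℝ), (n : ℝ) + 1 / 2) := by
  simp only [qv]
  rw [if_neg (by omega), if_neg (by omega), if_neg (by omega), if_neg (by omega),
    if_neg (by omega)]

end QV

end CrossingAux

open CrossingAux Set in
/-- A self-avoiding top-down crossing path of `[0,n]² ∩ ℤ²`, extended by vertical segments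
to the lines `y = n + 1/2` and `y = -1/2` and closed up along the left portion of the
boundary of `[-1/2, n+1/2]²`, forms a Jordan curve: a continuous injective image of the
circle. -/
theorem crossing_curve_is_jordan (n k : ℕ) (v : ℕ → ℤ × ℤ)
    (hbox : ∀ i ≤ k, 0 ≤ (v i).1 ∧ (v i).1 ≤ (n : ℤ) ∧ 0 ≤ (v i).2 ∧ (v i).2 ≤ (n : ℤ))
    (hadj : ∀ i < k, |(v i).1 - (v (i + 1)).1| + |(v i).2 - (v (i + 1)).2| = 1)
    (hinj : ∀ i ≤ k, ∀ j ≤ k, v i = v j → i = j)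
    (htop : (v 0).2 = (n : ℤ)) (hbot : (v k).2 = 0)
    (hint : ∀ i, 0 < i → i < k → (v i).2 ≠ 0 ∧ (v i).2 ≠ (n : ℤ)) :
    ∃ γ : AddCircle (1 : ℝ) → ℝ × ℝ, Continuous γ ∧ Function.Injective γ ∧
      Set.range γ =
        (⋃ i ∈ Finset.range k, segment ℝ (toPlaneR (v i)) (toPlaneR (v (i + 1))))
        ∪ segment ℝ ((((v 0).1 : ℝ), (n : ℝ) + 1/2)) (toPlaneR (v 0))
        ∪ segment ℝ (toPlaneR (v k)) ((((v k).1 : ℝ), -(1/2 : ℝ)))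
        ∪ segment ℝ ((((v 0).1 : ℝ), (n : ℝ) + 1/2)) ((-(1/2 : ℝ), (n : ℝ) + 1/2))
        ∪ segment ℝ ((-(1/2 : ℝ), (n : ℝ) + 1/2)) ((-(1/2 : ℝ), -(1/2 : ℝ)))
        ∪ segment ℝ ((-(1/2 : ℝ), -(1/2 : ℝ))) ((((v k).1 : ℝ), -(1/2 : ℝ))) := by
  classical
  have hN : (0:ℝ) ≤ (n:ℝ) := Nat.cast_nonneg n
  have hx0 : (0:ℝ) ≤ ((v 0).1 : ℝ) := by exact_mod_cast (hbox 0 (Nat.zero_le k)).1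
  have hxk : (0:ℝ) ≤ ((v k).1 : ℝ) := by exact_mod_cast (hbox k le_rfl).1
  set q : ℕ → ℝ × ℝ := qv n k v with hq
  have hq0 : q 0 = (((v 0).1 : ℝ), (n:ℝ) + 1/2) := qv_zero n k v
  have hqp : ∀ i : ℕ, 1 ≤ i → i ≤ k + 1 → q i = toPlaneR (v (i-1)) :=
    fun i h1 h2 => qv_path n k v h1 h2
  have hq2 : q (k+2) = (((v k).1 : ℝ), -(1/2 : ℝ)) := qv_k2 n k v
  have hq3 : q (k+3) = (-(1/2 : ℝ), -(1/2 : ℝ)) := qv_k3 n k v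
  have hq4 : q (k+4) = (-(1/2 : ℝ), (n:ℝ) + 1/2) := qv_k4 n k v
  have hq5 : q (k+5) = (((v 0).1 : ℝ), (n:ℝ) + 1/2) := qv_k5 n k v
  have hv0 : toPlaneR (v 0) = (((v 0).1:ℝ), (n:ℝ)) := by
    rw [toPlaneR, htop]; norm_num
  have hvk : toPlaneR (v k) = (((v k).1:ℝ), (0:ℝ)) := by
    rw [toPlaneR, hbot]; norm_num
  have hq1 : q 1 = (((v 0).1:ℝ), (n:ℝ)) := by
    rw [hqp 1 le_rfl (by omega)]; exact hv0
  have hqk1 : q (k+1) = (((v k).1:ℝ), (0:ℝ)) := by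
    rw [hqp (k+1) (by omega) le_rfl]
    simpa using hvk
  have hadjE : ∀ i : ℕ, 1 ≤ i → i ≤ k →
      |(v (i-1)).1 - (v i).1| + |(v (i-1)).2 - (v i).2| = 1 := by
    intro i h1 h2
    have := hadj (i-1) (by omega)
    rwa [Nat.sub_add_cancel h1] at this
  have hqB : ∀ i : ℕ, 1 ≤ i → i ≤ k →
      q i = toPlaneR (v (i-1)) ∧ q (i+1) = toPlaneR (v i) := by
    intro i h1 h2
    refine ⟨hqp i h1 (by omega), ?_⟩
    rw [hqp (i+1) (by omega) (by omega)]
    simp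
  have hboxR : ∀ i, i ≤ k → 0 ≤ ((v i).1:ℝ) ∧ ((v i).1:ℝ) ≤ (n:ℝ) ∧
      0 ≤ ((v i).2:ℝ) ∧ ((v i).2:ℝ) ≤ (n:ℝ) := by
    intro i hi
    obtain ⟨b1, b2, b3, b4⟩ := hbox i hi
    exact ⟨by exact_mod_cast b1, by exact_mod_cast b2, by exact_mod_cast b3,
      by exact_mod_cast b4⟩
  have catA : ∀ c : ℝ, edgePt (q 0) (q 1) c = (((v 0).1:ℝ), (n:ℝ) + (1-c)/2) := by
    intro c; rw [hq0, hq1, edgePt_mk]; exact Prod.ext (by ring) (by ring)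
  have catC : ∀ c : ℝ, edgePt (q (k+1)) (q (k+2)) c = (((v k).1:ℝ), -(c/2)) := by
    intro c; rw [hqk1, hq2, edgePt_mk]; exact Prod.ext (by ring) (by ring)
  have catD : ∀ c : ℝ, edgePt (q (k+2)) (q (k+3)) c
      = ((1-c) * ((v k).1:ℝ) + c * (-(1/2)), -(1/2)) := by
    intro c; rw [hq2, hq3, edgePt_mk]; exact Prod.ext (by ring) (by ring)
  have catE : ∀ c : ℝ, edgePt (q (k+3)) (q (k+4)) c
      = (-(1/2), (1-c) * (-(1/2)) + c * ((n:ℝ)+1/2)) := by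
    intro c; rw [hq3, hq4, edgePt_mk]; exact Prod.ext (by ring) (by ring)
  have catF : ∀ c : ℝ, edgePt (q (k+4)) (q (k+5)) c
      = ((1-c) * (-(1/2)) + c * ((v 0).1:ℝ), (n:ℝ)+1/2) := by
    intro c; rw [hq4, hq5, edgePt_mk]; exact Prod.ext (by ring) (by ring)
  have catB : ∀ i : ℕ, 1 ≤ i → i ≤ k → ∀ c : ℝ, 0 ≤ c → c ≤ 1 →
      0 ≤ (edgePt (q i) (q (i+1)) c).1 ∧ (edgePt (q i) (q (i+1)) c).1 ≤ (n:ℝ) ∧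
      0 ≤ (edgePt (q i) (q (i+1)) c).2 ∧ (edgePt (q i) (q (i+1)) c).2 ≤ (n:ℝ) := by
    intro i h1 h2 c hc0 hc1
    obtain ⟨e1, e2⟩ := hqB i h1 h2
    rw [e1, e2, toPlaneR, toPlaneR, edgePt_mk]
    obtain ⟨b1, b2, b3, b4⟩ := hboxR (i-1) (by omega)
    obtain ⟨b5, b6, b7, b8⟩ := hboxR i h2
    exact ⟨(convex_bound hc0 hc1 b1 b5 b2 b6).1, (convex_bound hc0 hc1 b1 b5 b2 b6).2,
      (convex_bound hc0 hc1 b3 b7 b4 b8).1, (convex_bound hc0 hc1 b3 b7 b4 b8).2⟩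
  have hne : ∀ i, i < k + 5 → q i ≠ q (i+1) := by
    intro i hi
    have hicase : i = 0 ∨ (1 ≤ i ∧ i ≤ k) ∨ i = k+1 ∨ i = k+2 ∨ i = k+3 ∨ i = k+4 := by omega
    rcases hicase with rfl | ⟨h1, h2⟩ | rfl | rfl | rfl | rfl
    · rw [hq0, hq1]
      intro h
      rw [Prod.mk.injEq] at h
      linarith [h.2]
    · obtain ⟨e1, e2⟩ := hqB i h1 h2
      rw [e1, e2, toPlaneR, toPlaneR]
      intro h
      rw [Prod.mk.injEq] at h
      have hv : v (i-1) = v i :=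
        Prod.ext (by exact_mod_cast h.1) (by exact_mod_cast h.2)
      have := hinj (i-1) (by omega) i h2 hv
      omega
    · rw [hqk1, hq2]
      intro h
      rw [Prod.mk.injEq] at h
      linarith [h.2]
    · rw [hq2, hq3]
      intro h
      rw [Prod.mk.injEq] at h
      linarith [h.1]
    · rw [hq3, hq4]
      intro h
      rw [Prod.mk.injEq] at h
      linarith [h.2]
    · rw [hq4, hq5]
      intro h
      rw [Prod.mk.injEq] at h
      linarith [h.1]
  have cross : ∀ i j : ℕ, i < j → j < k + 5 → ∀ a b : ℝ, 0 ≤ a → a < 1 → 0 ≤ b → b < 1 →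
      edgePt (q i) (q (i+1)) a = edgePt (q j) (q (j+1)) b → False := by
    intro i j hij hj a b ha0 ha1 hb0 hb1 heq
    have hicase : i = 0 ∨ (1 ≤ i ∧ i ≤ k) ∨ i = k+1 ∨ i = k+2 ∨ i = k+3 ∨ i = k+4 := by omega
    have hjcase : j = 0 ∨ (1 ≤ j ∧ j ≤ k) ∨ j = k+1 ∨ j = k+2 ∨ j = k+3 ∨ j = k+4 := by omega
    rcases hicase with rfl | ⟨hi1, hi2⟩ | rfl | rfl | rfl | rfl <;>
      rcases hjcase with rfl | ⟨hj1, hj2⟩ | rfl | rfl | rfl | rfl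
    -- (0,0)
    · omega
    -- (0,B)
    · have h2 : ((n:ℝ) + (1-a)/2) = (edgePt (q j) (q (j+1)) b).2 := by
        rw [← heq, catA a]
      have hb2 := (catB j hj1 hj2 b hb0 hb1.le).2.2.2
      linarith
    -- (0,C)
    · rw [catA a, catC b] at heq
      have h2 : ((n:ℝ) + (1-a)/2) = -(b/2) := congrArg Prod.snd heq
      linarith
    -- (0,D)
    · rw [catA a, catD b] at heq
      have h2 : ((n:ℝ) + (1-a)/2) = -(1/2 : ℝ) := congrArg Prod.snd heq
      linarith
    -- (0,E)
    · rw [catA a, catE b] at heq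
      have h1 : ((v 0).1:ℝ) = -(1/2 : ℝ) := congrArg Prod.fst heq
      linarith
    -- (0,F)
    · rw [catA a, catF b] at heq
      have h1 : ((v 0).1:ℝ) = (1-b) * (-(1/2)) + b * ((v 0).1:ℝ) := congrArg Prod.fst heq
      nlinarith [mul_pos (by linarith : (0:ℝ) < 1 - b)
        (by linarith : (0:ℝ) < ((v 0).1:ℝ) + 1/2)]
    -- (B,0)
    · omega
    -- (B,B)
    · obtain ⟨e1, e2⟩ := hqB i hi1 hi2
      obtain ⟨e3, e4⟩ := hqB j hj1 hj2
      rw [e1, e2, e3, e4] at heq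
      rcases edge_edge (hadjE i hi1 hi2) (hadjE j hj1 hj2) ha0 ha1 hb0 hb1 heq with
        h | ⟨h1, h2⟩
      · have := hinj (i-1) (by omega) (j-1) (by omega) h
        omega
      · have := hinj (i-1) (by omega) j hj2 h1
        omega
    -- (B,C)
    · have h2 : (edgePt (q i) (q (i+1)) a).2 = -(b/2) := by rw [heq, catC b]
      have hb2 := (catB i hi1 hi2 a ha0 ha1.le).2.2.1
      have hbz : b = 0 := by linarith
      subst hbz
      rw [edgePt_zero, hqp (k+1) (by omega) le_rfl] at heq
      obtain ⟨e1, e2⟩ := hqB i hi1 hi2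
      rw [e1, e2] at heq
      have hsimp : toPlaneR (v (k+1-1)) = (((v k).1:ℝ), ((v k).2:ℝ)) := by
        simp [toPlaneR]
      rw [hsimp] at heq
      obtain ⟨-, hc1, hc2⟩ := edgePt_lattice (hadjE i hi1 hi2) ha0 ha1 heq
      have hv : v (i-1) = v k := Prod.ext hc1 hc2
      have := hinj (i-1) (by omega) k le_rfl hv
      omega
    -- (B,D)
    · have h2 : (edgePt (q i) (q (i+1)) a).2 = -(1/2 : ℝ) := by rw [heq, catD b]
      have hb2 := (catB i hi1 hi2 a ha0 ha1.le).2.2.1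
      linarith
    -- (B,E)
    · have h1 : (edgePt (q i) (q (i+1)) a).1 = -(1/2 : ℝ) := by rw [heq, catE b]
      have hb1' := (catB i hi1 hi2 a ha0 ha1.le).1
      linarith
    -- (B,F)
    · have h2 : (edgePt (q i) (q (i+1)) a).2 = (n:ℝ) + 1/2 := by rw [heq, catF b]
      have hb2 := (catB i hi1 hi2 a ha0 ha1.le).2.2.2
      linarith
    -- (C,0)
    · omega
    -- (C,B)
    · omega
    -- (C,C)
    · omega
    -- (C,D)
    · rw [catC a, catD b] at heq
      have h2 : -(a/2) = -(1/2 : ℝ) := congrArg Prod.snd heq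
      linarith
    -- (C,E)
    · rw [catC a, catE b] at heq
      have h1 : ((v k).1:ℝ) = -(1/2 : ℝ) := congrArg Prod.fst heq
      linarith
    -- (C,F)
    · rw [catC a, catF b] at heq
      have h2 : -(a/2) = (n:ℝ) + 1/2 := congrArg Prod.snd heq
      linarith
    -- (D,0)
    · omega
    -- (D,B)
    · omega
    -- (D,C)
    · omega
    -- (D,D)
    · omega
    -- (D,E)
    · rw [catD a, catE b] at heq
      have h1 : (1-a) * ((v k).1:ℝ) + a * (-(1/2)) = -(1/2 : ℝ) := congrArg Prod.fst heq
      nlinarith [mul_pos (by linarith : (0:ℝ) < 1 - a)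
        (by linarith : (0:ℝ) < ((v k).1:ℝ) + 1/2)]
    -- (D,F)
    · rw [catD a, catF b] at heq
      have h2 : -(1/2 : ℝ) = (n:ℝ) + 1/2 := congrArg Prod.snd heq
      linarith
    -- (E,0)
    · omega
    -- (E,B)
    · omega
    -- (E,C)
    · omega
    -- (E,D)
    · omega
    -- (E,E)
    · omega
    -- (E,F)
    · rw [catE a, catF b] at heq
      have h2 : (1-a) * (-(1/2)) + a * ((n:ℝ)+1/2) = (n:ℝ) + 1/2 := congrArg Prod.snd heq
      nlinarith [mul_pos (by linarith : (0:ℝ) < 1 - a) (by linarith : (0:ℝ) < (n:ℝ) + 1)]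
    -- (F,*)
    · omega
    · omega
    · omega
    · omega
    · omega
    · omega
  have key : ∀ i, i < k+5 → ∀ j, j < k+5 → ∀ a b : ℝ, 0 ≤ a → a < 1 → 0 ≤ b → b < 1 →
      edgePt (q i) (q (i+1)) a = edgePt (q j) (q (j+1)) b → i = j ∧ a = b := by
    intro i hi j hj a b ha0 ha1 hb0 hb1 heq
    rcases lt_trichotomy i j with h | rfl | h
    · exact (cross i j h hj a b ha0 ha1 hb0 hb1 heq).elim
    · exact ⟨rfl, edgePt_inj (hne i hi) heq⟩
    · exact (cross j i h hi b a hb0 hb1 ha0 ha1 heq.symm).elim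
  set M : ℝ := ((k+5 : ℕ) : ℝ) with hM
  have hMpos : (0:ℝ) < M := by
    rw [hM]; exact_mod_cast Nat.succ_pos (k+4)
  set f : ℝ → ℝ × ℝ := fun t => polyG q (k+5) (M * t) with hf
  have hf0 : f 0 = q 0 := by
    show polyG q (k+5) (M * 0) = q 0
    rw [mul_zero]
    have h0 : ((0:ℕ):ℝ) = (0:ℝ) := by norm_num
    rw [show (0:ℝ) = ((0:ℕ):ℝ) by norm_num]
    rw [polyG_eq q (k+5) 0 (by omega) ((0:ℕ):ℝ) le_rfl (by norm_num)]
    rw [show ((0:ℕ):ℝ) - ((0:ℕ):ℝ) = 0 by ring, edgePt_zero]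
  have hf1 : f 1 = q 0 := by
    show polyG q (k+5) (M * 1) = q 0
    rw [mul_one, hM, polyG_self, hq5, hq0]
  have hfc : Continuous f := by
    rw [hf]
    exact (polyG_continuous q (k+5)).comp (continuous_const.mul continuous_id)
  have decomp : ∀ s : ℝ, 0 ≤ s → s < 1 →
      ∃ i : ℕ, i < k + 5 ∧ ∃ a : ℝ, 0 ≤ a ∧ a < 1 ∧ M * s = (i:ℝ) + a ∧
        f s = edgePt (q i) (q (i+1)) a := by
    intro s hs0 hs1
    have hu0 : 0 ≤ M * s := mul_nonneg hMpos.le hs0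
    have huM : M * s < M := by nlinarith
    have hfl : ⌊M * s⌋₊ < k + 5 := by
      rw [hM] at huM
      exact (Nat.floor_lt hu0).mpr huM
    refine ⟨⌊M * s⌋₊, hfl, M * s - (⌊M * s⌋₊ : ℝ), ?_, ?_, by ring, ?_⟩
    · have := Nat.floor_le hu0; linarith
    · have := Nat.lt_floor_add_one (M * s); linarith
    · show polyG q (k+5) (M * s) = _
      rw [polyG_eq q (k+5) ⌊M * s⌋₊ hfl (M * s) (Nat.floor_le hu0)
        (le_of_lt (Nat.lt_floor_add_one (M * s)))]
  have hinjOn : Set.InjOn f (Set.Ico (0:ℝ) (0+1)) := by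
    rw [zero_add]
    intro s hs t ht hst
    obtain ⟨i, hi, a, ha0, ha1, hia, hfs⟩ := decomp s hs.1 hs.2
    obtain ⟨j, hj, b, hb0, hb1, hjb, hft⟩ := decomp t ht.1 ht.2
    rw [hfs, hft] at hst
    obtain ⟨rfl, rfl⟩ := key i hi j hj a b ha0 ha1 hb0 hb1 hst
    have hMM : M * s = M * t := by rw [hia, hjb]
    exact mul_left_cancel₀ (ne_of_gt hMpos) hMM
  have hliftdef : AddCircle.liftIco (1:ℝ) 0 f
      = Set.restrict _ f ∘ (AddCircle.equivIco (1:ℝ) 0) := rfl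
  have hginj : Function.Injective (AddCircle.liftIco (1:ℝ) 0 f) := by
    rw [hliftdef]
    exact (Set.injOn_iff_injective.mp hinjOn).comp (AddCircle.equivIco (1:ℝ) 0).injective
  have hrange : Set.range (AddCircle.liftIco (1:ℝ) 0 f) = f '' (Set.Ico (0:ℝ) 1) := by
    rw [hliftdef, Set.range_comp, (AddCircle.equivIco (1:ℝ) 0).surjective.range_eq,
      Set.image_univ]
    exact (Set.range_domRestrict f _).trans (by rw [zero_add])
  have hmem : ∀ l : ℕ, l < k+5 → ∀ c : ℝ, 0 ≤ c → c < 1 →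
      edgePt (q l) (q (l+1)) c ∈ f '' (Set.Ico (0:ℝ) 1) := by
    intro l hl c hc0 hc1
    have hl1 : (l:ℝ) + 1 ≤ M := by
      rw [hM]; exact_mod_cast Nat.succ_le_of_lt hl
    refine ⟨((l:ℝ) + c) / M, ⟨div_nonneg (by positivity) hMpos.le, ?_⟩, ?_⟩
    · rw [div_lt_one hMpos]; linarith
    · show polyG q (k+5) (M * (((l:ℝ) + c)/M)) = _
      rw [mul_div_cancel₀ _ (ne_of_gt hMpos)]
      rw [polyG_eq q (k+5) l hl _ (by linarith) (by linarith)]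
      congr 1
      ring
  have himg : f '' (Set.Ico (0:ℝ) 1) = ⋃ i ∈ Finset.range (k+5), segment ℝ (q i) (q (i+1)) := by
    apply Set.Subset.antisymm
    · rintro x ⟨s, hs, rfl⟩
      obtain ⟨i, hi, a, ha0, ha1, -, hfs⟩ := decomp s hs.1 hs.2
      rw [hfs]
      simp only [Set.mem_iUnion, Finset.mem_range]
      refine ⟨i, hi, ?_⟩
      rw [segment_eq_image]
      exact ⟨a, ⟨ha0, ha1.le⟩, rfl⟩
    · intro x hx
      simp only [Set.mem_iUnion, Finset.mem_range] at hx
      obtain ⟨i, hi, hseg⟩ := hx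
      rw [segment_eq_image] at hseg
      obtain ⟨θ, ⟨hθ0, hθ1⟩, rfl⟩ := hseg
      rcases lt_or_eq_of_le hθ1 with hθ | rfl
      · exact hmem i hi θ hθ0 hθ
      · show edgePt (q i) (q (i+1)) 1 ∈ _
        rw [edgePt_one]
        rcases Nat.lt_or_ge (i+1) (k+5) with hi1 | hi1
        · have := hmem (i+1) hi1 0 le_rfl (by norm_num)
          rwa [edgePt_zero] at this
        · have hik : i + 1 = k + 5 := by omega
          rw [hik, hq5, ← hq0]
          have := hmem 0 (by omega) 0 le_rfl (by norm_num)
          rwa [edgePt_zero] at this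
  have hfin : (⋃ i ∈ Finset.range (k+5), segment ℝ (q i) (q (i+1))) =
      (⋃ i ∈ Finset.range k, segment ℝ (toPlaneR (v i)) (toPlaneR (v (i + 1))))
        ∪ segment ℝ ((((v 0).1 : ℝ), (n : ℝ) + 1/2)) (toPlaneR (v 0))
        ∪ segment ℝ (toPlaneR (v k)) ((((v k).1 : ℝ), -(1/2 : ℝ)))
        ∪ segment ℝ ((((v 0).1 : ℝ), (n : ℝ) + 1/2)) ((-(1/2 : ℝ), (n : ℝ) + 1/2))
        ∪ segment ℝ ((-(1/2 : ℝ), (n : ℝ) + 1/2)) ((-(1/2 : ℝ), -(1/2 : ℝ)))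
        ∪ segment ℝ ((-(1/2 : ℝ), -(1/2 : ℝ))) ((((v k).1 : ℝ), -(1/2 : ℝ))) := by
    apply Set.Subset.antisymm
    · intro x hx
      simp only [Set.mem_iUnion, Finset.mem_range] at hx
      obtain ⟨i, hi, hseg⟩ := hx
      have hicase : i = 0 ∨ (1 ≤ i ∧ i ≤ k) ∨ i = k+1 ∨ i = k+2 ∨ i = k+3 ∨ i = k+4 := by
        omega
      rcases hicase with rfl | ⟨h1, h2⟩ | rfl | rfl | rfl | rfl
      · rw [hq0, hqp 1 le_rfl (by omega)] at hseg
        exact Or.inl (Or.inl (Or.inl (Or.inl (Or.inr hseg))))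
      · obtain ⟨e1, e2⟩ := hqB i h1 h2
        rw [e1, e2] at hseg
        refine Or.inl (Or.inl (Or.inl (Or.inl (Or.inl ?_))))
        simp only [Set.mem_iUnion, Finset.mem_range]
        refine ⟨i-1, by omega, ?_⟩
        have hidx : i - 1 + 1 = i := by omega
        rw [hidx]
        exact hseg
      · rw [hqp (k+1) (by omega) le_rfl, hq2] at hseg
        refine Or.inl (Or.inl (Or.inl (Or.inr ?_)))
        simpa using hseg
      · rw [hq2, hq3, segment_symm] at hseg
        exact Or.inr hseg
      · rw [hq3, hq4, segment_symm] at hseg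
        exact Or.inl (Or.inr hseg)
      · rw [hq4, hq5, segment_symm] at hseg
        exact Or.inl (Or.inl (Or.inr hseg))
    · intro x hx
      simp only [Set.mem_iUnion, Finset.mem_range]
      rcases hx with ((((hA | hB) | hC) | hD) | hE) | hF
      · simp only [Set.mem_iUnion, Finset.mem_range] at hA
        obtain ⟨t, ht, hseg⟩ := hA
        refine ⟨t+1, by omega, ?_⟩
        obtain ⟨e1, e2⟩ := hqB (t+1) (by omega) (by omega)
        rw [e1, e2]
        simpa using hseg
      · exact ⟨0, by omega, by rw [hq0, hqp 1 le_rfl (by omega)]; exact hB⟩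
      · refine ⟨k+1, by omega, ?_⟩
        rw [hqp (k+1) (by omega) le_rfl, hq2]
        simpa using hC
      · refine ⟨k+4, by omega, ?_⟩
        rw [hq4, hq5, segment_symm]
        exact hD
      · refine ⟨k+3, by omega, ?_⟩
        rw [hq3, hq4, segment_symm]
        exact hE
      · refine ⟨k+2, by omega, ?_⟩
        rw [hq2, hq3, segment_symm]
        exact hF
  refine ⟨AddCircle.liftIco (1:ℝ) 0 f, ?_, hginj, ?_⟩
  · exact AddCircle.liftIco_zero_continuous (by rw [hf0, hf1]) hfc.continuousOn
  · rw [hrange, himg, hfin]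
end
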